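/- The partial order C = {S : ω → [ω]^{<ω} : Σ_{n=1}^∞ |S(n)|/2^n < ∞}, ordered by eventual containment S ⊆* S' (S(n) ⊆ S'(n) for all but finitely many n), is Tukey equivalent to ℓ¹ = {f : ω → ℝ_{≥0} : Σ_n f(n) < ∞} ordered by eventual pointwise domination ≤*. -/

import Mathlib

/-!
A slalom `S` is the same thing as the set of pairs `(n, k)` with `k ∈ S n`, each weighted `2⁻ⁿ`;
`S ∈ C` says exactly that the total weight is finite. Spreading these weights over `ℕ` by the
pairing bijection sends `C` into `ℓ¹`, and a bound `g` of images is pulled back to the slalom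
`n ↦ {k | 2⁻ⁿ ≤ g (pair n k)}`. Conversely `f ∈ ℓ¹` is sent to its dyadic level sets
`n ↦ {k | 2⁻⁽ⁿ⁺¹⁾ < f k ≤ 2⁻ⁿ}`, whose weight is at most `2 Σ f`, and a bound `T` of the level
slaloms yields the bound `k ↦ Σ_{n : k ∈ T n} 2⁻ⁿ` in `ℓ¹`.
-/

/-- A subset of a set with a relation `r` is bounded if it has an `r`-upper bound. -/
def BddRel {α : Type*} (r : α → α → Prop) (X : Set α) : Prop :=
  ∃ b, ∀ a ∈ X, r a b

/-- `f` is a Tukey map from `(α, rP)` to `(β, rQ)`: preimages of bounded sets are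
bounded. -/
def IsTukeyMap {α β : Type*} (rP : α → α → Prop) (rQ : β → β → Prop) (f : α → β) : Prop :=
  ∀ X : Set β, BddRel rQ X → BddRel rP (f ⁻¹' X)

/-- The partial order `C` of slaloms `S : ω → [ω]^{<ω}` with `Σ |S(n)|/2^n < ∞`. -/
def SlalomC : Type :=
  {S : ℕ → Finset ℕ // Summable fun n => ((S n).card : ℝ) / 2 ^ n}

/-- `ℓ¹`: nonnegative summable sequences of reals. -/
def EllOne : Type :=
  {f : ℕ → ℝ // (∀ n, 0 ≤ f n) ∧ Summable f}

/-- Eventual containment `S ⊆* S'` on `C`. -/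
def slalomLe (S S' : SlalomC) : Prop :=
  ∀ᶠ n in Filter.atTop, S.1 n ⊆ S'.1 n

/-- Eventual pointwise domination `f ≤* g` on `ℓ¹`. -/
def ellOneLe (f g : EllOne) : Prop :=
  ∀ᶠ n in Filter.atTop, f.1 n ≤ g.1 n

open Filter

lemma Summable.finite_setOf_le {f : ℕ → ℝ} (hf : Summable f) {ε : ℝ} (hε : 0 < ε) :
    {k | ε ≤ f k}.Finite := by
  simpa only [not_lt] using
    Filter.eventually_cofinite.mp (hf.tendsto_cofinite_zero.eventually (gt_mem_nhds hε))

noncomputable def slalomWeight (S : ℕ → Finset ℕ) (p : ℕ × ℕ) : ℝ :=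
  if p.2 ∈ S p.1 then (1 / 2) ^ p.1 else 0

section slalomWeight

variable {S : ℕ → Finset ℕ}

lemma slalomWeight_nonneg (p : ℕ × ℕ) : 0 ≤ slalomWeight S p := by
  unfold slalomWeight
  split_ifs <;> positivity

lemma slalomWeight_of_mem {n k : ℕ} (h : k ∈ S n) : slalomWeight S (n, k) = (1 / 2) ^ n :=
  if_pos h

lemma tsum_slalomWeight_row (n : ℕ) :
    ∑' k, slalomWeight S (n, k) = ((S n).card : ℝ) / 2 ^ n := by
  rw [tsum_eq_sum (s := S n) (f := fun k => slalomWeight S (n, k)) fun k hk => if_neg hk,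
    Finset.sum_congr rfl fun k hk => slalomWeight_of_mem hk]
  simp [div_eq_mul_inv]

lemma summable_slalomWeight_iff :
    Summable (slalomWeight S) ↔ Summable fun n => ((S n).card : ℝ) / 2 ^ n := by
  have hrows (n : ℕ) : Summable fun k => slalomWeight S (n, k) :=
    summable_of_ne_finset_zero (s := S n) fun _ hk => if_neg hk
  simp only [summable_prod_of_nonneg (fun p => slalomWeight_nonneg p), hrows,
    tsum_slalomWeight_row, implies_true, true_and]

lemma summable_slalomWeight_of_injOn {f : ℕ → ℝ} (hf : Summable f) (e : ℕ × ℕ → ℕ)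
    (he : Set.InjOn e {p | p.2 ∈ S p.1}) (hle : ∀ n, ∀ k ∈ S n, (1 / 2) ^ n ≤ f (e (n, k))) :
    Summable (slalomWeight S) := by
  have hgraph : Summable ({p : ℕ × ℕ | p.2 ∈ S p.1}.indicator (f ∘ e)) :=
    summable_subtype_iff_indicator.mp (hf.comp_injective he.injective)
  refine .of_nonneg_of_le slalomWeight_nonneg (fun ⟨n, k⟩ => ?_) hgraph
  by_cases hk : k ∈ S n
  · rw [slalomWeight_of_mem hk, Set.indicator_apply, if_pos (by exact hk)]
    exact hle n k hk
  · rw [Set.indicator_apply, if_neg (by exact hk)]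
    exact (if_neg hk).le

end slalomWeight

noncomputable def slalomToEllOne (S : SlalomC) : EllOne :=
  ⟨slalomWeight S.1 ∘ Nat.unpair, fun _ => slalomWeight_nonneg _,
    (Nat.pairEquiv.symm.summable_iff.mpr (summable_slalomWeight_iff.mpr S.2))⟩

lemma isTukeyMap_slalomToEllOne : IsTukeyMap slalomLe ellOneLe slalomToEllOne := by
  rintro X ⟨g, hg⟩
  have hfin (n : ℕ) : {k | (1 / 2 : ℝ) ^ n ≤ g.1 (Nat.pair n k)}.Finite :=
    (g.2.2.finite_setOf_le (by positivity)).preimage (f := Nat.pair n)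
      fun _ _ _ _ h => (Nat.pair_eq_pair.mp h).2
  let T : ℕ → Finset ℕ := fun n => (hfin n).toFinset
  have hT : Summable fun n => ((T n).card : ℝ) / 2 ^ n := by
    refine summable_slalomWeight_iff.mp
      (summable_slalomWeight_of_injOn g.2.2 (fun p => Nat.pair p.1 p.2) ?_ ?_)
    · exact fun p _ q _ h => Prod.ext_iff.mpr (Nat.pair_eq_pair.mp h)
    · exact fun n k hk => (Set.Finite.mem_toFinset (hfin n)).mp hk
  refine ⟨⟨T, hT⟩, fun S hS => ?_⟩
  obtain ⟨M, hM⟩ := eventually_atTop.mp (hg _ hS)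
  filter_upwards [eventually_ge_atTop M] with n hn k hk
  have hle := hM (Nat.pair n k) (hn.trans (Nat.left_le_pair n k))
  simp only [slalomToEllOne, Function.comp_apply, Nat.unpair_pair,
    slalomWeight_of_mem hk] at hle
  exact (Set.Finite.mem_toFinset _).mpr hle

lemma le_of_mem_Ioc_half_pow {x : ℝ} {n m : ℕ}
    (hn : x ∈ Set.Ioc ((1 / 2) ^ (n + 1)) ((1 / 2) ^ n)) (hm : x ≤ (1 / 2) ^ m) : m ≤ n := by
  have := (pow_lt_pow_iff_right_of_lt_one₀ (by norm_num) (by norm_num)).mp (hn.1.trans_le hm)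
  omega

lemma eq_of_mem_Ioc_half_pow {x : ℝ} {n m : ℕ}
    (hn : x ∈ Set.Ioc ((1 / 2) ^ (n + 1)) ((1 / 2) ^ n))
    (hm : x ∈ Set.Ioc ((1 / 2) ^ (m + 1)) ((1 / 2) ^ m)) : n = m :=
  le_antisymm (le_of_mem_Ioc_half_pow hm hn.2) (le_of_mem_Ioc_half_pow hn hm.2)

lemma Summable.finite_setOf_mem_Ioc_half_pow {f : ℕ → ℝ} (hf : Summable f) (n : ℕ) :
    {k | f k ∈ Set.Ioc ((1 / 2) ^ (n + 1)) ((1 / 2) ^ n)}.Finite :=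
  (hf.finite_setOf_le (by positivity)).subset fun _ hk => hk.1.le

noncomputable def dyadicLevel {f : ℕ → ℝ} (hf : Summable f) (n : ℕ) : Finset ℕ :=
  (hf.finite_setOf_mem_Ioc_half_pow n).toFinset

lemma mem_dyadicLevel {f : ℕ → ℝ} {hf : Summable f} {n k : ℕ} :
    k ∈ dyadicLevel hf n ↔ f k ∈ Set.Ioc ((1 / 2) ^ (n + 1)) ((1 / 2) ^ n) :=
  Set.Finite.mem_toFinset _

/-- Each `k` lies in at most one level, and there `2⁻ⁿ < 2 f k`; so the levels have total weight
at most `2 Σ f`. -/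
lemma summable_card_dyadicLevel_div_pow {f : ℕ → ℝ} (hf : Summable f) :
    Summable fun n => ((dyadicLevel hf n).card : ℝ) / 2 ^ n := by
  refine summable_slalomWeight_iff.mp
    (summable_slalomWeight_of_injOn (hf.mul_left 2) Prod.snd ?_ fun n k hk => ?_)
  · exact fun p hp q hq h =>
      Prod.ext (eq_of_mem_Ioc_half_pow (mem_dyadicLevel.mp hp) (h ▸ mem_dyadicLevel.mp hq)) h
  · have := (mem_dyadicLevel.mp hk).1
    rw [pow_succ] at this
    linarith

noncomputable def ellOneToSlalom (f : EllOne) : SlalomC :=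
  ⟨dyadicLevel f.2.2, summable_card_dyadicLevel_div_pow f.2.2⟩

lemma isTukeyMap_ellOneToSlalom : IsTukeyMap ellOneLe slalomLe ellOneToSlalom := by
  rintro X ⟨T, hT⟩
  have hW : Summable (slalomWeight T.1) := summable_slalomWeight_iff.mpr T.2
  let g : ℕ → ℝ := fun k => ∑' n, slalomWeight T.1 (n, k)
  have hg_nonneg (k : ℕ) : 0 ≤ g k := tsum_nonneg fun _ => slalomWeight_nonneg _
  refine ⟨⟨g, hg_nonneg, hW.prod_symm.prod⟩, fun f hf => ?_⟩
  obtain ⟨N, hN⟩ := eventually_atTop.mp (hT _ hf)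
  filter_upwards [f.2.2.tendsto_atTop_zero.eventually_le_const
    (by positivity : (0 : ℝ) < (1 / 2) ^ N)] with k hk
  rcases le_or_gt (f.1 k) 0 with hk0 | hk0
  · exact hk0.trans (hg_nonneg k)
  obtain ⟨n, hn⟩ := exists_nat_pow_near_of_lt_one hk0
    (hk.trans (pow_le_one₀ (by norm_num) (by norm_num))) (by norm_num)
    (by norm_num : (1 / 2 : ℝ) < 1)
  have hkT : k ∈ T.1 n :=
    hN n (le_of_mem_Ioc_half_pow hn hk) (mem_dyadicLevel (hf := f.2.2) |>.mpr hn)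
  calc f.1 k ≤ (1 / 2) ^ n := hn.2
    _ = slalomWeight T.1 (n, k) := (slalomWeight_of_mem hkT).symm
    _ ≤ g k := hW.prod_symm.prod_factor k |>.le_tsum n fun _ _ => slalomWeight_nonneg _

/-- `(C, ⊆*)` and `(ℓ¹, ≤*)` are Tukey equivalent: there are Tukey maps in both
directions. -/
theorem slalomC_tukey_equiv_ellOne :
    (∃ φ : SlalomC → EllOne, IsTukeyMap slalomLe ellOneLe φ) ∧
    (∃ ψ : EllOne → SlalomC, IsTukeyMap ellOneLe slalomLe ψ) :=
  ⟨⟨slalomToEllOne, isTukeyMap_slalomToEllOne⟩, ⟨ellOneToSlalom, isTukeyMap_ellOneToSlalom⟩⟩
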